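/- arXiv:2505.09165 — 2 statements merged into one kernel-verified Lean document; each statement's English description precedes it below -/
import Mathlib

section
/- For each pair consisting of a congestion-graph state and a spot-occupancy state, at most one passenger queue can occur among configurations reachable from a fixed initial configuration: if (G', Q₁, S') and (G', Q₂, S') are both reachable from (G, Q, S), then Q₁ = Q₂. -/
/-- A Bus Out configuration: a congestion graph (vertex set `V`, blocking
relation `edge`, labels `(color, capacity)`), a passenger queue `Q` (list of
colors), and a tuple `S` of parking spots, each empty (`none`) or holding a
bus `(color, remaining seats)`. -/
structure Config where
  V : Finset ℕ
  edge : ℕ → ℕ → Bool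
  label : ℕ → ℕ × ℕ
  Q : List ℕ
  S : List (Option (ℕ × ℕ))

/-- A bus is free if no bus in the graph blocks it (out-degree zero). -/
def Config.Free (C : Config) (v : ℕ) : Prop :=
  v ∈ C.V ∧ ∀ w ∈ C.V, ¬ C.edge v w

/-- Player transition: move a free bus onto an empty spot. -/
def PlayerStep (C C' : Config) : Prop :=
  ∃ v i, C.Free v ∧ C.S[(i : ℕ)]? = some none ∧
    C' = { C with V := C.V.erase v, S := C.S.set i (some (C.label v)) }

/-- Automatic transition: the head passenger boards a matching-colored bus on
a spot; the bus departs (spot becomes empty) when it has no seat left. -/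
def AutoStep (C C' : Config) : Prop :=
  ∃ x Q' i k, C.Q = x :: Q' ∧ C.S[(i : ℕ)]? = some (some (x, k)) ∧
    C' = { C with Q := Q', S := C.S.set i (if k ≤ 1 then none else some (x, k - 1)) }

def AutoApplicable (C : Config) : Prop := ∃ C', AutoStep C C'

/-- A transition: automatic transitions are forced before player moves. -/
def Step (C C' : Config) : Prop :=
  (¬ AutoApplicable C ∧ PlayerStep C C') ∨ AutoStep C C'

/-- The empty configuration: no buses, no passengers, all spots empty. -/
def Config.IsEmpty (C : Config) : Prop :=
  C.V = ∅ ∧ C.Q = [] ∧ ∀ sp ∈ C.S, sp = none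

/-- Solvable: the empty configuration is reachable by transitions. -/
def Solvable (C : Config) : Prop :=
  ∃ C', Relation.ReflTransGen Step C C' ∧ C'.IsEmpty

/-- Acyclicity of the congestion graph (restricted to its vertex set). -/
def Config.Acyclic (C : Config) : Prop :=
  ∀ v, ¬ Relation.TransGen (fun u w => u ∈ C.V ∧ w ∈ C.V ∧ C.edge u w) v v

/-- Remaining seats of color `x` offered by a parking spot. -/
def spotSeats (x : ℕ) (sp : Option (ℕ × ℕ)) : ℕ :=
  match sp with
  | some (y, k) => if y = x then k else 0
  | none => 0

/-- Total remaining capacity of color `x` over buses in the graph and spots. -/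
def Config.capOf (C : Config) (x : ℕ) : ℕ :=
  (C.V.filter (fun v => (C.label v).1 = x)).sum (fun v => (C.label v).2)
  + (C.S.map (spotSeats x)).sum

/-- Eligibility: acyclic graph and, for every color, the number of passengers
equals the total remaining capacity of buses of that color. -/
def Config.Eligible (C : Config) : Prop :=
  C.Acyclic ∧ ∀ x, C.Q.count x = C.capOf x

/-- Well-formedness: all capacities / remaining seat counts are positive. -/
def Config.WF (C : Config) : Prop :=
  (∀ v ∈ C.V, 1 ≤ (C.label v).2) ∧ ∀ sp ∈ C.S, ∀ x k, sp = some (x, k) → 1 ≤ k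

/-- Colors occurring in the configuration (buses, queue, and spots). -/
def colorSet (C : Config) : Finset ℕ :=
  (C.V.image fun v => (C.label v).1) ∪ C.Q.toFinset
    ∪ ((C.S.filterMap id).map Prod.fst).toFinset

/-- Seats remaining in a spot (any color). -/
def seatsOf : Option (ℕ × ℕ) → ℕ
  | some p => p.2
  | none => 0

/-- Indicator that a spot holds a zero-seat bus. -/
def zOf : Option (ℕ × ℕ) → ℕ
  | some p => if p.2 = 0 then 1 else 0
  | none => 0

def spotVal (sp : Option (ℕ × ℕ)) : ℕ := seatsOf sp + zOf sp

/-- Potential: total seats plus zero-capacity indicators, over buses and spots. -/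
def Nval (C : Config) : ℕ :=
  C.V.sum (fun v => (C.label v).2 + (if (C.label v).2 = 0 then 1 else 0))
  + (C.S.map spotVal).sum

lemma sum_map_set {α β : Type*} [AddCommMonoid β] [Sub β] (f : α → β) :
    ∀ (l : List α) (i : ℕ) (x a : α), l[i]? = some x →
    ((l.set i a).map f).sum + f x = (l.map f).sum + f a := by
  intro l
  induction l with
  | nil => intro i x a h; simp at h
  | cons hd tl ih =>
    intro i x a h
    cases i with
    | zero =>
      simp only [List.getElem?_cons_zero] at h
      injection h with h; subst h
      simp [List.set]
      abel
    | succ n =>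
      simp only [List.getElem?_cons_succ] at h
      have := ih n x a h
      simp only [List.set, List.map_cons, List.sum_cons]
      rw [add_assoc, this]
      abel

lemma step_inv {C C' : Config} (h : Step C C') :
    C'.Q.length + Nval C = C.Q.length + Nval C' ∧ C'.Q <:+ C.Q ∧
    C'.label = C.label := by
  rcases h with ⟨-, v, i, hfree, hget, rfl⟩ | ⟨x, Q', i, k, hQ, hget, rfl⟩
  · -- player step
    have hv : v ∈ C.V := hfree.1
    have hV : ((C.V.erase v).sum
        (fun w => (C.label w).2 + (if (C.label w).2 = 0 then 1 else 0)))
        + ((C.label v).2 + (if (C.label v).2 = 0 then 1 else 0))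
        = C.V.sum (fun w => (C.label w).2 + (if (C.label w).2 = 0 then 1 else 0)) :=
      Finset.sum_erase_add _ _ hv
    have hSsum := sum_map_set (f := spotVal) C.S i none (some (C.label v)) hget
    refine ⟨?_, List.suffix_refl _, rfl⟩
    simp only [Nval] at *
    simp only [spotVal, seatsOf, zOf] at hSsum ⊢
    omega
  · -- auto step
    have hSsum := sum_map_set (f := spotVal) C.S i (some (x, k))
      (if k ≤ 1 then none else some (x, k - 1)) hget
    have hval : spotVal (if k ≤ 1 then none else some (x, k - 1)) + 1
        = spotVal (some (x, k)) := by
      rcases k with _ | _ | n <;>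
        simp [spotVal, seatsOf, zOf, Nat.succ_le_succ_iff]
    refine ⟨?_, ⟨[x], hQ.symm⟩, rfl⟩
    simp only [Nval, hQ, List.length_cons]
    omega

lemma reach_inv {C C' : Config} (h : Relation.ReflTransGen Step C C') :
    C'.Q.length + Nval C = C.Q.length + Nval C' ∧ C'.Q <:+ C.Q ∧
    C'.label = C.label := by
  induction h with
  | refl => exact ⟨rfl, List.suffix_refl _, rfl⟩
  | tail _ hstep ih =>
    obtain ⟨e1, s1, l1⟩ := ih
    obtain ⟨e2, s2, l2⟩ := step_inv hstep
    exact ⟨by omega, s2.trans s1, l2.trans l1⟩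

/-- Among configurations reachable from a fixed initial configuration, the
congestion-graph state together with the spot-occupancy state determines the
passenger queue. -/
theorem queue_determined (C C₁ C₂ : Config)
    (h₁ : Relation.ReflTransGen Step C C₁)
    (h₂ : Relation.ReflTransGen Step C C₂)
    (hV : C₁.V = C₂.V) (hS : C₁.S = C₂.S) : C₁.Q = C₂.Q := by
  obtain ⟨e1, ⟨t₁, ht₁⟩, l1⟩ := reach_inv h₁
  obtain ⟨e2, ⟨t₂, ht₂⟩, l2⟩ := reach_inv h₂
  have hN : Nval C₁ = Nval C₂ := by
    unfold Nval
    rw [hV, hS, l1, l2]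
  have hlen : C₁.Q.length = C₂.Q.length := by omega
  have happ : t₁ ++ C₁.Q = t₂ ++ C₂.Q := ht₁.trans ht₂.symm
  have hlt : t₁.length = t₂.length := by
    have := congrArg List.length happ
    simp at this; omega
  exact (List.append_inj happ hlt).2
end

section
/- Backward direction of the congestion-free reduction: with the configuration of the previous statement (s spots, colors x₀,…,x_s, edgeless congestion graph with 3n x₀-buses of capacities a₁,…,a_{3n}, n capacity-2 buses of each color x₁,…,x_{s−1}, n capacity-1 buses of color x_s, queue (x₁⋯x_{s−1} x₀^T x_s x₁⋯x_{s−1})^n, T = (∑a_i)/n, and T/4 < a_i < T/2 for all i), if the configuration is solvable then M = {a₁,…,a_{3n}} admits a partition into n triples each summing to T. -/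
/-- A 3-partition of `a 0, …, a (3n-1)` into `n` triples each summing to `T`. -/
def HasPartition (n T : ℕ) (a : ℕ → ℕ) : Prop :=
  ∃ f : ℕ → ℕ, (∀ i < 3 * n, f i < n) ∧
    ∀ g < n, ((Finset.range (3 * n)).filter (fun i => f i = g)).card = 3 ∧
      ((Finset.range (3 * n)).filter (fun i => f i = g)).sum a = T

/-- The congestion-free configuration reduced from a 3-Partition instance:
`s` empty spots, colors `0, …, s` (`x_j` is `j`); an edgeless graph with one
bus of color `0` and capacity `a i` for each `i < 3n` (vertex `Nat.pair 0 i`),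
`n` buses of color `j` with capacity `2` for each `1 ≤ j ≤ s - 1`, and `n`
buses of color `s` with capacity `1` (vertices `Nat.pair j m`, `m < n`);
queue `(x₁⋯x_{s-1} x₀^T x_s x₁⋯x_{s-1})^n`. -/
def Bconf (n T s : ℕ) (a : ℕ → ℕ) : Config where
  V := ((Finset.range (3 * n)).image fun i => Nat.pair 0 i) ∪
       ((Finset.Icc 1 s).biUnion fun j =>
          (Finset.range n).image fun m => Nat.pair j m)
  edge := fun _ _ => false
  label := fun v =>
    if v.unpair.1 = 0 then (0, a v.unpair.2)
    else if v.unpair.1 = s then (s, 1)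
    else (v.unpair.1, 2)
  Q := (List.replicate n
         (List.range' 1 (s - 1) ++ List.replicate T 0 ++ [s]
           ++ List.range' 1 (s - 1))).flatten
  S := List.replicate s none

namespace BOaux

lemma sum_map_set (f : Option (ℕ×ℕ) → ℕ) :
    ∀ (S : List (Option (ℕ×ℕ))) (i : ℕ) (b old : Option (ℕ×ℕ)), S[i]? = some old →
      ((S.set i b).map f).sum + f old = (S.map f).sum + f b := by
  intro S
  induction S with
  | nil => intro i b old h; simp at h
  | cons c t ih =>
    intro i b old h
    cases i with
    | zero => simp at h; subst h; simp [List.set]; ring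
    | succ i =>
      simp only [List.getElem?_cons_succ] at h
      simp only [List.set, List.map_cons, List.sum_cons]
      have := ih i b old h
      omega

lemma coe_set : ∀ (S : List (Option (ℕ×ℕ))) (i : ℕ) (b old : Option (ℕ×ℕ)),
    S[i]? = some old →
    ((S.set i b : List (Option (ℕ×ℕ))) : Multiset (Option (ℕ×ℕ))) + {old}
      = (S : Multiset (Option (ℕ×ℕ))) + {b} := by
  intro S
  induction S with
  | nil => intro i b old h; simp at h
  | cons c t ih =>
    intro i b old h
    cases i with
    | zero =>
      simp at h; subst h
      simp [List.set]
      rw [← Multiset.cons_coe, ← Multiset.cons_coe, add_comm, add_comm (c ::ₘ (t:Multiset _)),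
        Multiset.singleton_add, Multiset.singleton_add, Multiset.cons_swap]
    | succ i =>
      simp only [List.getElem?_cons_succ] at h
      simp only [List.set]
      rw [← Multiset.cons_coe, ← Multiset.cons_coe, Multiset.cons_add, Multiset.cons_add,
        ih i b old h]

end BOaux
def L (s : ℕ) : List ℕ := List.range' 1 (s - 1)

def Seg (T s : ℕ) : List ℕ := L s ++ List.replicate T 0 ++ [s] ++ L s

def bL (s : ℕ) (a : ℕ → ℕ) : ℕ → ℕ × ℕ := fun v =>
  if v.unpair.1 = 0 then (0, a v.unpair.2)
  else if v.unpair.1 = s then (s, 1)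
  else (v.unpair.1, 2)

def V0 (n s : ℕ) : Finset ℕ :=
  ((Finset.range (3 * n)).image fun i => Nat.pair 0 i) ∪
    ((Finset.Icc 1 s).biUnion fun j => (Finset.range n).image fun m => Nat.pair j m)

structure Good (n T s : ℕ) (a : ℕ → ℕ) (C : Config) : Prop where
  edge : C.edge = fun _ _ => false
  label : C.label = bL s a
  vsub : C.V ⊆ V0 n s
  slen : C.S.length = s
  count : ∀ x, C.Q.count x = C.capOf x
  shape : ∀ sp ∈ C.S, ∀ x k, sp = some (x, k) →
    1 ≤ k ∧ (x = 0 ∨ (1 ≤ x ∧ x ≤ s - 1 ∧ k ≤ 2) ∨ (x = s ∧ k = 1))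

lemma step_V {C C' : Config} (h : Step C C') : C'.V ⊆ C.V := by
  rcases h with ⟨_, v, i, _, _, rfl⟩ | ⟨x, Q', i, k, _, _, rfl⟩
  · exact Finset.erase_subset _ _
  · exact fun x hx => hx

lemma rt_V {C C' : Config} (h : Relation.ReflTransGen Step C C') : C'.V ⊆ C.V := by
  induction h with
  | refl => exact fun x hx => hx
  | tail _ h ih => exact fun x hx => ih (step_V h hx)

lemma step_Q {C C' : Config} (h : Step C C') : C'.Q = C.Q ∨ ∃ x, C.Q = x :: C'.Q := by
  rcases h with ⟨_, v, i, _, _, rfl⟩ | ⟨x, Q', i, k, hQ, _, rfl⟩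
  · exact Or.inl rfl
  · exact Or.inr ⟨x, hQ⟩
lemma spotSeats_none (x : ℕ) : spotSeats x none = 0 := rfl

lemma spotSeats_some (x y k : ℕ) : spotSeats x (some (y, k)) = if y = x then k else 0 := rfl

section
variable {n T s : ℕ} {a : ℕ → ℕ}

lemma bL_cases (hs : 1 ≤ s) (hT : 0 < T) (hbound : ∀ i < 3 * n, T < 4 * a i ∧ 2 * a i < T)
    {v : ℕ} (hv : v ∈ V0 n s) :
    (∃ i < 3 * n, bL s a v = (0, a i) ∧ 1 ≤ a i) ∨
    (∃ j, 1 ≤ j ∧ j ≤ s - 1 ∧ bL s a v = (j, 2)) ∨ bL s a v = (s, 1) := by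
  simp only [V0, Finset.mem_union, Finset.mem_image, Finset.mem_biUnion, Finset.mem_range,
    Finset.mem_Icc] at hv
  rcases hv with ⟨i, hi, rfl⟩ | ⟨j, ⟨hj1, hj2⟩, m, hm, rfl⟩
  · left
    refine ⟨i, hi, ?_, ?_⟩
    · simp [bL, Nat.unpair_pair]
    · have := (hbound i hi).1; omega
  · by_cases hjs : j = s
    · right; right; subst hjs; simp [bL, Nat.unpair_pair]; omega
    · right; left
      refine ⟨j, hj1, by omega, ?_⟩
      simp [bL, Nat.unpair_pair]
      rw [if_neg (by omega), if_neg hjs]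

lemma good_step (hs : 1 ≤ s) (hT : 0 < T) (hbound : ∀ i < 3 * n, T < 4 * a i ∧ 2 * a i < T)
    {C C' : Config} (hG : Good n T s a C) (h : Step C C') : Good n T s a C' := by
  rcases h with ⟨_, v, i, hfree, hsp, rfl⟩ | ⟨x, Q', i, k, hQ, hsp, rfl⟩
  · -- player step
    have hvV : v ∈ C.V := hfree.1
    have hlab := hG.label
    constructor
    · exact hG.edge
    · exact hG.label
    · exact fun w hw => hG.vsub (Finset.mem_of_mem_erase hw)
    · simp [hG.slen]
    · intro x
      have hkey := BOaux.sum_map_set (spotSeats x) C.S i (some (C.label v)) none hsp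
      rw [spotSeats_none] at hkey
      have hself : ∀ p : ℕ × ℕ, spotSeats x (some p) = if p.1 = x then p.2 else 0 := by
        intro p; cases p; simp [spotSeats]
      have hsplit : (C.V.filter (fun w => (C.label w).1 = x)).sum (fun w => (C.label w).2)
          = ((C.V.erase v).filter (fun w => (C.label w).1 = x)).sum (fun w => (C.label w).2)
            + spotSeats x (some (C.label v)) := by
        rw [hself]
        by_cases hvx : (C.label v).1 = x
        · rw [Finset.filter_erase, if_pos hvx]
          have hvmem : v ∈ C.V.filter (fun w => (C.label w).1 = x) := by
            simp only [Finset.mem_filter]; exact ⟨hvV, hvx⟩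
          exact (Finset.sum_erase_add _ _ hvmem).symm
        · rw [Finset.filter_erase, Finset.erase_eq_of_notMem (by simp [Finset.mem_filter, hvx]),
            if_neg hvx]
          omega
      have := hG.count x
      simp only [Config.capOf] at this ⊢
      omega
    · intro sp hsp' x k he
      rcases List.mem_or_eq_of_mem_set hsp' with hmem | rfl
      · exact hG.shape sp hmem x k he
      · simp only [Option.some.injEq] at he
        rcases bL_cases (n := n) hs hT hbound (hG.vsub hvV) with ⟨i', _, hb, hai⟩ | ⟨j, hj1, hj2, hb⟩ | hb <;>
          rw [hG.label] at he <;> rw [hb] at he <;>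
          (first | (cases he; constructor; omega; omega) | skip)
  · -- auto step
    have hmem : some (x, k) ∈ C.S := List.mem_of_getElem? hsp
    have hk1 : 1 ≤ k := (hG.shape _ hmem x k rfl).1
    constructor
    · exact hG.edge
    · exact hG.label
    · exact hG.vsub
    · simp [hG.slen]
    · intro y
      have hkey := BOaux.sum_map_set (spotSeats y) C.S i
        (if k ≤ 1 then none else some (x, k - 1)) (some (x, k)) hsp
      have hdelta : spotSeats y (some (x, k))
          = spotSeats y (if k ≤ 1 then none else some (x, k - 1))
            + (if x = y then 1 else 0) := by
        by_cases hk : k ≤ 1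
        · rw [if_pos hk, spotSeats_none, spotSeats_some]
          by_cases hxy : x = y
          · rw [if_pos hxy, if_pos hxy]; omega
          · rw [if_neg hxy, if_neg hxy]
        · rw [if_neg hk, spotSeats_some, spotSeats_some]
          by_cases hxy : x = y
          · rw [if_pos hxy, if_pos hxy, if_pos hxy]; omega
          · rw [if_neg hxy, if_neg hxy, if_neg hxy]
      have hcount := hG.count y
      rw [hQ] at hcount
      simp only [List.count_cons, beq_iff_eq] at hcount
      simp only [Config.capOf] at hcount ⊢
      by_cases hxy : x = y
      · subst hxy; rw [if_pos rfl] at hcount hdelta; omega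
      · rw [if_neg hxy] at hcount hdelta; omega
    · intro sp hsp' y k' he
      rcases List.mem_or_eq_of_mem_set hsp' with hmem' | rfl
      · exact hG.shape sp hmem' y k' he
      · by_cases hk : k ≤ 1
        · simp [hk] at he
        · simp only [hk, if_false] at he
          cases he
          have := hG.shape _ hmem x k rfl
          rcases this.2 with h0 | ⟨h1, h2, h3⟩ | ⟨h1, h2⟩ <;>
            [ (exact ⟨by omega, Or.inl h0⟩);
              (exact ⟨by omega, Or.inr (Or.inl ⟨h1, h2, by omega⟩)⟩);
              (omega) ]

lemma rt_good (hs : 1 ≤ s) (hT : 0 < T) (hbound : ∀ i < 3 * n, T < 4 * a i ∧ 2 * a i < T)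
    {C C' : Config} (hG : Good n T s a C) (h : Relation.ReflTransGen Step C C') :
    Good n T s a C' := by
  induction h with
  | refl => exact hG
  | tail _ h ih => exact good_step hs hT hbound ih h

end
lemma drop_range' : ∀ (m q u : ℕ), List.drop q (List.range' u m) = List.range' (u + q) (m - q) := by
  intro m
  induction m with
  | zero => intro q u; simp
  | succ m ih =>
    intro q u
    cases q with
    | zero => simp
    | succ q =>
      rw [List.range'_succ]
      simp only [List.drop_succ_cons]
      rw [ih q (u+1)]
      congr 1
      · omega
      · omega

lemma L_length : (L s).length = s - 1 := by simp [L]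

lemma mem_L {j s : ℕ} : j ∈ L s ↔ 1 ≤ j ∧ j ≤ s - 1 := by
  simp [L, List.mem_range'_1]; omega

lemma L_nodup {s : ℕ} : (L s).Nodup := List.nodup_range'

lemma count_L_mem {j s : ℕ} (h1 : 1 ≤ j) (h2 : j ≤ s - 1) : (L s).count j = 1 := by
  have hmem : j ∈ L s := mem_L.mpr ⟨h1, h2⟩
  have h3 := (List.nodup_iff_count_le_one.mp (L_nodup (s := s))) j
  have h4 := List.count_pos_iff.mpr hmem
  omega

lemma count_L_notmem {j s : ℕ} (h : j ∉ L s) : (L s).count j = 0 :=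
  List.count_eq_zero.mpr h

lemma drop_L {q s : ℕ} : List.drop q (L s) = List.range' (1 + q) (s - 1 - q) := drop_range' _ _ _

lemma L_cons {q s : ℕ} (h : q < s - 1) : List.drop q (L s) = (q + 1) :: List.drop (q + 1) (L s) := by
  rw [drop_L, drop_L]
  have h2 : s - 1 - q = (s - 1 - (q+1)) + 1 := by omega
  rw [h2, List.range'_succ]
  congr 1
  omega

lemma count_flatten_replicate (x : ℕ) (l : List ℕ) :
    ∀ m, ((List.replicate m l).flatten).count x = m * l.count x := by
  intro m
  induction m with
  | zero => simp
  | succ m ih => rw [List.replicate_succ, List.flatten_cons, List.count_append, ih]; ring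

lemma count_Seg_mid {j s : ℕ} (T : ℕ) (h1 : 1 ≤ j) (h2 : j ≤ s - 1) (hs : 1 ≤ s) :
    (Seg T s).count j = 2 := by
  simp only [Seg, List.count_append, count_L_mem h1 h2, List.count_replicate, List.count_singleton]
  have : ¬ (0 == j) = true := by simp; omega
  have h2' : ¬ (s == j) = true := by simp; omega
  simp [this, h2']

lemma count_Seg_zero {s : ℕ} (T : ℕ) (hs : 1 ≤ s) : (Seg T s).count 0 = T := by
  have h0 : (0:ℕ) ∉ L s := by rw [mem_L]; omega
  simp only [Seg, List.count_append, count_L_notmem h0, List.count_replicate,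
    List.count_singleton]
  have : ¬ (s == 0) = true := by simp; omega
  simp [this]

lemma count_Seg_s {s : ℕ} (T : ℕ) (hs : 1 ≤ s) : (Seg T s).count s = 1 := by
  have h0 : s ∉ L s := by rw [mem_L]; omega
  simp only [Seg, List.count_append, count_L_notmem h0, List.count_replicate,
    List.count_singleton]
  have : ¬ (0 == s) = true := by simp; omega
  simp [this]

lemma count_Seg_other {x s : ℕ} (T : ℕ) (hx0 : x ≠ 0) (hxs : x ≠ s) (hxL : x ∉ L s) :
    (Seg T s).count x = 0 := by
  simp only [Seg, List.count_append, count_L_notmem hxL, List.count_replicate,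
    List.count_singleton]
  have h1 : ¬ (0 == x) = true := by simp; omega
  have h2 : ¬ (s == x) = true := by simp; omega
  simp [h1, h2]

lemma replicate_succ_flatten (r : ℕ) (l : List ℕ) :
    (List.replicate (r+1) l).flatten = l ++ (List.replicate r l).flatten := by
  rw [List.replicate_succ, List.flatten_cons]
def colOf : Option (ℕ × ℕ) → ℕ := fun sp => match sp with | none => 0 | some p => p.1

lemma colOf_some (x k : ℕ) : colOf (some (x, k)) = x := rfl

lemma spotSeats_ne {j : ℕ} {sp : Option (ℕ × ℕ)} (h : colOf sp ≠ j) : spotSeats j sp = 0 := by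
  match sp with
  | none => rfl
  | some (x, k) =>
    simp only [colOf] at h
    simp [spotSeats_some, h]

lemma sum_map_ite (p : Option (ℕ×ℕ) → Prop) [DecidablePred p] (M : Multiset (Option (ℕ×ℕ))) :
    (M.map (fun x => if p x then (1:ℕ) else 0)).sum = Multiset.countP p M := by
  induction M using Multiset.induction with
  | empty => simp
  | cons a M ih =>
    simp only [Multiset.map_cons, Multiset.sum_cons, Multiset.countP_cons, ih]
    by_cases h : p a <;> simp [h] <;> omega

lemma PL0aux : ∀ (cs : List ℕ), cs.Nodup → ∀ (M : Multiset (Option (ℕ × ℕ))),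
    M.map colOf = ↑cs →
    (∀ sp ∈ M, ∃ j k, sp = some (j, k) ∧ 1 ≤ k ∧ k ≤ 2) →
    (∀ j ∈ cs, Odd ((M.map (spotSeats j)).sum)) →
    M = Multiset.map (fun j => some (j, 1)) ↑cs := by
  intro cs
  induction cs with
  | nil =>
    intro _ M hmap _ _
    have : Multiset.card M = 0 := by
      have := congrArg Multiset.card hmap
      simpa using this
    simp [Multiset.card_eq_zero.mp this]
  | cons c cs' ih =>
    intro hnd M hmap hsh hodd
    have hcmem : c ∈ M.map colOf := by rw [hmap]; simp
    rcases Multiset.mem_map.mp hcmem with ⟨sp, hspM, hcol⟩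
    rcases hsh sp hspM with ⟨j, k, rfl, hk1, hk2⟩
    rw [colOf_some] at hcol
    subst hcol
    rcases Multiset.exists_cons_of_mem hspM with ⟨M₁, rfl⟩
    have hmap₁ : M₁.map colOf = ↑cs' := by
      rw [Multiset.map_cons, colOf_some] at hmap
      rw [← Multiset.cons_coe] at hmap
      exact (Multiset.cons_inj_right _).mp hmap
    have hnotc : ∀ sp' ∈ M₁, colOf sp' ≠ j := by
      intro sp' hsp' he
      have : colOf sp' ∈ M₁.map colOf := Multiset.mem_map_of_mem _ hsp'
      rw [hmap₁, he] at this
      exact (List.nodup_cons.mp hnd).1 (by exact_mod_cast this)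
    have hzero : (M₁.map (spotSeats j)).sum = 0 := by
      apply Multiset.sum_eq_zero
      intro x hx
      rcases Multiset.mem_map.mp hx with ⟨sp', hsp', rfl⟩
      exact spotSeats_ne (hnotc sp' hsp')
    have hoddj := hodd j (by simp)
    rw [Multiset.map_cons, Multiset.sum_cons, hzero, spotSeats_some, if_pos rfl] at hoddj
    have hk : k = 1 := by rcases hoddj with ⟨m, hm⟩; omega
    subst hk
    have hrec : M₁ = Multiset.map (fun j => some (j, 1)) ↑cs' := by
      apply ih (List.nodup_cons.mp hnd).2 M₁ hmap₁
      · intro sp' hsp'; exact hsh sp' (Multiset.mem_cons_of_mem hsp')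
      · intro j' hj'
        have := hodd j' (List.mem_cons_of_mem _ hj')
        rw [Multiset.map_cons, Multiset.sum_cons] at this
        have hne : j ≠ j' := by
          intro he; subst he; exact (List.nodup_cons.mp hnd).1 hj'
        rw [spotSeats_some, if_neg hne] at this
        simpa using this
    rw [hrec]
    simp [Multiset.map_cons]
lemma PL {s : ℕ} (hs : 1 ≤ s) (M : Multiset (Option (ℕ × ℕ)))
    (hcard : Multiset.card M = s)
    (hodd : ∀ j, 1 ≤ j → j ≤ s - 1 → Odd ((M.map (spotSeats j)).sum))
    (hshape : ∀ sp ∈ M, ∀ x k, sp = some (x, k) →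
      1 ≤ k ∧ (x = 0 ∨ (1 ≤ x ∧ x ≤ s - 1 ∧ k ≤ 2) ∨ (x = s ∧ k = 1))) :
    ∃ sl, M = Multiset.map (fun j => some (j, 1)) ↑(L s) + {sl} ∧
      (sl = none ∨ (∃ k, 1 ≤ k ∧ sl = some (0, k)) ∨ sl = some (s, 1) ∨
        ∃ j k, 1 ≤ j ∧ j ≤ s - 1 ∧ sl = some (j, k)) := by
  classical
  set Colored : Option (ℕ × ℕ) → Prop := fun sp => 1 ≤ colOf sp ∧ colOf sp ≤ s - 1 with hCol
  set M₁ := M.filter Colored with hM₁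
  set M₂ := M.filter (fun sp => ¬ Colored sp) with hM₂
  have hMsplit : M₁ + M₂ = M := Multiset.filter_add_not _ M
  have hsub₁ : M₁ ≤ M := Multiset.filter_le _ M
  have hsub₂ : M₂ ≤ M := Multiset.filter_le _ M
  -- elements of M₁
  have helt₁ : ∀ sp ∈ M₁, ∃ j k, sp = some (j, k) ∧ 1 ≤ j ∧ j ≤ s - 1 ∧ 1 ≤ k ∧ k ≤ 2 := by
    intro sp hsp
    have hc : Colored sp := Multiset.of_mem_filter hsp
    have hm : sp ∈ M := Multiset.mem_of_le hsub₁ hsp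
    match sp with
    | none => exact absurd hc.1 (by simp [hCol, colOf])
    | some (x, k) =>
      have hsh := hshape _ hm x k rfl
      rw [hCol] at hc
      simp only [colOf_some] at hc
      refine ⟨x, k, rfl, hc.1, hc.2, hsh.1, ?_⟩
      rcases hsh.2 with h0 | ⟨_, _, h⟩ | ⟨h1, _⟩
      · omega
      · exact h
      · exfalso; omega
  -- M₂ elements give no seats of middle colors
  have hz₂ : ∀ j, 1 ≤ j → j ≤ s - 1 → (M₂.map (spotSeats j)).sum = 0 := by
    intro j hj1 hj2
    apply Multiset.sum_eq_zero
    intro x hx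
    rcases Multiset.mem_map.mp hx with ⟨sp, hsp, rfl⟩
    have hc : ¬ Colored sp := (Multiset.mem_filter.mp hsp).2
    have hm : sp ∈ M := Multiset.mem_of_le hsub₂ hsp
    apply spotSeats_ne
    intro he
    apply hc
    show 1 ≤ colOf sp ∧ colOf sp ≤ s - 1
    rw [he]
    exact ⟨hj1, hj2⟩
  have hodd₁ : ∀ j, 1 ≤ j → j ≤ s - 1 → Odd ((M₁.map (spotSeats j)).sum) := by
    intro j hj1 hj2
    have := hodd j hj1 hj2
    rw [← hMsplit, Multiset.map_add, Multiset.sum_add, hz₂ j hj1 hj2, add_zero] at this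
    exact this
  -- each middle color occurs in M₁
  have hmemN : ∀ j, 1 ≤ j → j ≤ s - 1 → j ∈ M₁.map colOf := by
    intro j hj1 hj2
    have hoddj := hodd₁ j hj1 hj2
    have hne : (M₁.map (spotSeats j)).sum ≠ 0 := by
      rcases hoddj with ⟨m, hm⟩; omega
    by_contra hnotin
    apply hne
    apply Multiset.sum_eq_zero
    intro x hx
    rcases Multiset.mem_map.mp hx with ⟨sp, hsp, rfl⟩
    apply spotSeats_ne
    intro he
    exact hnotin (he ▸ Multiset.mem_map_of_mem _ hsp)
  have hLN : (↑(L s) : Multiset ℕ) ≤ M₁.map colOf := by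
    rw [Multiset.le_iff_count]
    intro j
    by_cases hj : j ∈ L s
    · have hj' := mem_L.mp hj
      have h1 : Multiset.count j (↑(L s) : Multiset ℕ) = 1 := by
        rw [Multiset.coe_count]; exact count_L_mem hj'.1 hj'.2
      rw [h1]
      exact Multiset.one_le_count_iff_mem.mpr (hmemN j hj'.1 hj'.2)
    · have h1 : Multiset.count j (↑(L s) : Multiset ℕ) = 0 := by
        rw [Multiset.coe_count]; exact count_L_notmem hj
      omega
  have hcardL : Multiset.card (↑(L s) : Multiset ℕ) = s - 1 := by
    simp [L_length]
  have hcards : Multiset.card M₁ + Multiset.card M₂ = s := by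
    rw [← hcard, ← hMsplit]; simp
  have hcard₁ : s - 1 ≤ Multiset.card M₁ := by
    have := Multiset.card_le_card hLN
    simpa [hcardL] using this
  have hcard₂ : Multiset.card M₂ ≤ 1 := by omega
  interval_cases hc2 : Multiset.card M₂
  · -- M₂ empty, extra colored bus
    have hM₂0 : M₂ = 0 := Multiset.card_eq_zero.mp hc2
    rw [hM₂0, add_zero] at hMsplit
    have hcN : Multiset.card (M₁.map colOf) = s := by rw [Multiset.card_map, hMsplit, hcard]
    have hD : (↑(L s) : Multiset ℕ) + (M₁.map colOf - (↑(L s) : Multiset ℕ)) = M₁.map colOf := by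
      rw [add_comm]; exact tsub_add_cancel_of_le hLN
    have hcD : Multiset.card (M₁.map colOf - (↑(L s) : Multiset ℕ)) = 1 := by
      rw [Multiset.card_sub hLN, hcN, hcardL]; omega
    rcases Multiset.card_eq_one.mp hcD with ⟨c0, hc0⟩
    rw [hc0] at hD
    -- j₀ has two occurrences
    have hcmem : c0 ∈ M₁.map colOf := by rw [← hD]; simp
    rcases Multiset.mem_map.mp hcmem with ⟨sp₀, hsp₀, hcol₀⟩
    rcases helt₁ sp₀ hsp₀ with ⟨j₀, k₀, rfl, hj₀1, hj₀2, _, _⟩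
    rw [colOf_some] at hcol₀
    subst hcol₀
    have hcL : j₀ ∈ L s := mem_L.mpr ⟨hj₀1, hj₀2⟩
    have hcount2 : Multiset.count j₀ (M₁.map colOf) = 2 := by
      rw [← hD, Multiset.count_add, Multiset.count_singleton_self, Multiset.coe_count,
        count_L_mem hj₀1 hj₀2]
    -- there is an element (j₀, 2)
    have hex2 : some (j₀, 2) ∈ M₁ := by
      by_contra hno
      have hcongr : M₁.map (spotSeats j₀) = M₁.map (fun sp => if colOf sp = j₀ then 1 else 0) := by
        apply Multiset.map_congr rfl
        intro sp hsp
        by_cases hcc : colOf sp = j₀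
        · rcases helt₁ sp hsp with ⟨j, k, rfl, _, _, hk1, hk2⟩
          rw [colOf_some] at hcc
          subst hcc
          have hk : k = 1 := by
            rcases Nat.lt_or_ge k 2 with h | h
            · omega
            · exfalso; apply hno; have : k = 2 := by omega
              rw [← this]; exact hsp
          subst hk
          simp [spotSeats_some, colOf_some]
        · rw [spotSeats_ne hcc, if_neg hcc]
      have hsum := hodd₁ j₀ hj₀1 hj₀2
      rw [hcongr, sum_map_ite] at hsum
      have : Multiset.countP (fun sp => colOf sp = j₀) M₁ = 2 := by
        rw [← hcount2, Multiset.count_map, Multiset.countP_eq_card_filter]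
        congr 1
        apply Multiset.filter_congr
        intro sp _
        exact ⟨fun h => h.symm, fun h => h.symm⟩
      rw [this] at hsum
      exact (by decide : ¬ Odd 2) hsum
    rcases Multiset.exists_cons_of_mem hex2 with ⟨M₁', hM₁'⟩
    have hmapM₁' : M₁'.map colOf = ↑(L s) := by
      have : M₁.map colOf = j₀ ::ₘ M₁'.map colOf := by rw [hM₁']; simp [colOf_some]
      rw [this] at hD
      have hD' : j₀ ::ₘ (↑(L s) : Multiset ℕ) = j₀ ::ₘ M₁'.map colOf := by
        rw [← hD]
        rw [add_comm, Multiset.singleton_add]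
      exact ((Multiset.cons_inj_right _).mp hD').symm
    have hM₁'eq : M₁' = Multiset.map (fun j => some (j, 1)) ↑(L s) := by
      apply PL0aux (L s) L_nodup M₁' hmapM₁'
      · intro sp hsp
        rcases helt₁ sp (by rw [hM₁']; exact Multiset.mem_cons_of_mem hsp) with
          ⟨j, k, rfl, _, _, hk1, hk2⟩
        exact ⟨j, k, rfl, hk1, hk2⟩
      · intro j hj
        have hj' := mem_L.mp hj
        have := hodd₁ j hj'.1 hj'.2
        rw [hM₁', Multiset.map_cons, Multiset.sum_cons] at this
        by_cases hjc : j₀ = j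
        · subst hjc
          rw [spotSeats_some, if_pos rfl] at this
          rcases this with ⟨m, hm⟩
          exact ⟨m - 1, by omega⟩
        · rw [spotSeats_some, if_neg hjc] at this
          simpa using this
    refine ⟨some (j₀, 2), ?_, ?_⟩
    · rw [← hMsplit, hM₁', hM₁'eq]
      rw [add_comm, Multiset.singleton_add]
    · right; right; right; exact ⟨j₀, 2, hj₀1, hj₀2, rfl⟩
  · -- M₂ a singleton slack
    have hcard₁' : Multiset.card M₁ = s - 1 := by omega
    have hN : M₁.map colOf = ↑(L s) := by
      refine (Multiset.eq_of_le_of_card_le hLN ?_).symm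
      rw [Multiset.card_map, hcard₁', hcardL]
    have hM₁eq : M₁ = Multiset.map (fun j => some (j, 1)) ↑(L s) := by
      apply PL0aux (L s) L_nodup M₁ hN
      · intro sp hsp
        rcases helt₁ sp hsp with ⟨j, k, rfl, _, _, hk1, hk2⟩
        exact ⟨j, k, rfl, hk1, hk2⟩
      · intro j hj
        have hj' := mem_L.mp hj
        exact hodd₁ j hj'.1 hj'.2
    rcases Multiset.card_eq_one.mp (by omega : Multiset.card M₂ = 1) with ⟨sl, hsl⟩
    refine ⟨sl, ?_, ?_⟩
    · rw [← hMsplit, hM₁eq, hsl]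
    · have hslM₂ : sl ∈ M₂ := by rw [hsl]; simp
      have hnc : ¬ Colored sl := (Multiset.mem_filter.mp hslM₂).2
      have hm : sl ∈ M := Multiset.mem_of_le hsub₂ hslM₂
      match sl with
      | none => left; rfl
      | some (x, k) =>
        have hsh := hshape _ hm x k rfl
        rcases hsh.2 with h0 | ⟨h1, h2, _⟩ | ⟨h1, h2⟩
        · right; left; exact ⟨k, hsh.1, by rw [h0]⟩
        · exfalso; apply hnc; rw [hCol]; simp only [colOf_some]; exact ⟨h1, h2⟩
        · right; right; left; rw [h1, h2]
lemma bL_pair0 {s : ℕ} (a : ℕ → ℕ) (i : ℕ) : bL s a (Nat.pair 0 i) = (0, a i) := by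
  simp [bL, Nat.unpair_pair]

lemma bL_pairj {s j : ℕ} (a : ℕ → ℕ) (m : ℕ) (h1 : 1 ≤ j) (h2 : j ≤ s - 1) (hs : 1 ≤ s) :
    bL s a (Nat.pair j m) = (j, 2) := by
  simp only [bL, Nat.unpair_pair]
  rw [if_neg (by omega), if_neg (by omega)]

lemma bL_pairs {s : ℕ} (a : ℕ → ℕ) (m : ℕ) (hs : 1 ≤ s) : bL s a (Nat.pair s m) = (s, 1) := by
  simp only [bL, Nat.unpair_pair]
  rw [if_neg (by omega)]
  simp

lemma mem_V0 {n s v : ℕ} : v ∈ V0 n s ↔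
    (∃ i < 3 * n, v = Nat.pair 0 i) ∨ (∃ j, 1 ≤ j ∧ j ≤ s ∧ ∃ m < n, v = Nat.pair j m) := by
  simp only [V0, Finset.mem_union, Finset.mem_image, Finset.mem_biUnion, Finset.mem_range,
    Finset.mem_Icc]
  constructor
  · rintro (⟨i, hi, rfl⟩ | ⟨j, ⟨h1, h2⟩, m, hm, rfl⟩)
    · exact Or.inl ⟨i, hi, rfl⟩
    · exact Or.inr ⟨j, h1, h2, m, hm, rfl⟩
  · rintro (⟨i, hi, rfl⟩ | ⟨j, h1, h2, m, hm, rfl⟩)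
    · exact Or.inl ⟨i, hi, rfl⟩
    · exact Or.inr ⟨j, ⟨h1, h2⟩, m, hm, rfl⟩

section
variable {n T s : ℕ} {a : ℕ → ℕ}

lemma filter0_eq {C : Config} (hs : 1 ≤ s) (hG : Good n T s a C) :
    C.V.filter (fun v => (C.label v).1 = 0)
      = ((Finset.range (3 * n)).filter (fun i => Nat.pair 0 i ∈ C.V)).image (Nat.pair 0) := by
  ext v
  simp only [Finset.mem_filter, Finset.mem_image, Finset.mem_range]
  constructor
  · rintro ⟨hv, hcol⟩
    rcases mem_V0.mp (hG.vsub hv) with ⟨i, hi, rfl⟩ | ⟨j, hj1, hj2, m, hm, rfl⟩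
    · exact ⟨i, ⟨hi, hv⟩, rfl⟩
    · exfalso
      rw [hG.label] at hcol
      by_cases hjs : j = s
      · subst hjs; rw [bL_pairs a m hs] at hcol; simp at hcol; omega
      · rw [bL_pairj a m hj1 (by omega) hs] at hcol; simp at hcol; omega
  · rintro ⟨i, ⟨hi, hmem⟩, rfl⟩
    refine ⟨hmem, ?_⟩
    rw [hG.label, bL_pair0]

lemma cap0_eq {C : Config} (hs : 1 ≤ s) (hG : Good n T s a C)
    (hnone : ∀ sp ∈ C.S, sp = none) :
    C.capOf 0 = ((Finset.range (3 * n)).filter (fun i => Nat.pair 0 i ∈ C.V)).sum a := by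
  have hsp : (C.S.map (spotSeats 0)).sum = 0 := by
    apply List.sum_eq_zero
    intro x hx
    rcases List.mem_map.mp hx with ⟨sp, hsp, rfl⟩
    rw [hnone sp hsp]; rfl
  rw [Config.capOf, hsp, add_zero, filter0_eq hs hG]
  have hinj : ∀ x ∈ (Finset.range (3 * n)).filter (fun i => Nat.pair 0 i ∈ C.V),
      ∀ y ∈ (Finset.range (3 * n)).filter (fun i => Nat.pair 0 i ∈ C.V),
      Nat.pair 0 x = Nat.pair 0 y → x = y := by
    intro x _ y _ h
    have h2 := congrArg (fun w => (Nat.unpair w).2) h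
    simpa [Nat.unpair_pair] using h2
  rw [Finset.sum_image hinj]
  apply Finset.sum_congr rfl
  intro i _
  rw [hG.label, bL_pair0]

lemma graph_even {C : Config} (hs : 1 ≤ s) (hG : Good n T s a C) {j : ℕ}
    (hj1 : 1 ≤ j) (hj2 : j ≤ s - 1) :
    ∃ m, (C.V.filter (fun v => (C.label v).1 = j)).sum (fun v => (C.label v).2) = 2 * m := by
  refine ⟨(C.V.filter (fun v => (C.label v).1 = j)).card, ?_⟩
  rw [Finset.sum_congr rfl (g := fun _ => 2) ?_]
  · rw [Finset.sum_const, smul_eq_mul, mul_comm]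
  · intro v hv
    rcases Finset.mem_filter.mp hv with ⟨hvV, hcol⟩
    rw [hG.label] at hcol ⊢
    rcases mem_V0.mp (hG.vsub hvV) with ⟨i, hi, rfl⟩ | ⟨j', hj'1, hj'2, m, hm, rfl⟩
    · rw [bL_pair0] at hcol; simp at hcol; omega
    · by_cases hjs : j' = s
      · subst hjs; rw [bL_pairs a m hs] at hcol; simp at hcol; omega
      · rw [bL_pairj a m hj'1 (by omega) hs] at hcol ⊢

end

lemma suffix_reach : ∀ (C D : Config), Relation.ReflTransGen Step C D → D.Q = [] →
    ∀ A B : List ℕ, C.Q = A ++ B →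
    ∃ E, Relation.ReflTransGen Step C E ∧ Relation.ReflTransGen Step E D ∧ E.Q = B := by
  intro C D htr
  induction htr using Relation.ReflTransGen.head_induction_on with
  | refl =>
    intro hD A B hAB
    refine ⟨D, Relation.ReflTransGen.refl, Relation.ReflTransGen.refl, ?_⟩
    rw [hD] at hAB ⊢
    rcases List.append_eq_nil_iff.mp hAB.symm with ⟨_, h2⟩
    exact h2.symm
  | @head C F h' htl ih =>
    intro hD A B hAB
    cases A with
    | nil =>
      exact ⟨C, Relation.ReflTransGen.refl, Relation.ReflTransGen.head h' htl, by simpa using hAB⟩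
    | cons x A' =>
      rcases step_Q h' with he | ⟨y, hy⟩
      · rcases ih hD (x :: A') B (by rw [he, hAB]) with ⟨E, h1, h2, h3⟩
        exact ⟨E, Relation.ReflTransGen.head h' h1, h2, h3⟩
      · rw [hAB] at hy
        have : F.Q = A' ++ B := by
          injection hy with _ h2
          exact h2.symm
        rcases ih hD A' B this with ⟨E, h1, h2, h3⟩
        exact ⟨E, Relation.ReflTransGen.head h' h1, h2, h3⟩
section
variable {n T s : ℕ} {a : ℕ → ℕ}

lemma cascade (hs : 1 ≤ s) (hT : 0 < T)
    (hbound : ∀ i < 3 * n, T < 4 * a i ∧ 2 * a i < T) (r : ℕ) :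
    ∀ (C D : Config), Relation.ReflTransGen Step C D → D.IsEmpty →
    Good n T s a C →
    (C.Q = s :: (L s ++ (List.replicate r (Seg T s)).flatten) ∨
      ∃ q, q ≤ s - 1 ∧ C.Q = List.drop q (L s) ++ (List.replicate r (Seg T s)).flatten ∧
        (C.S : Multiset (Option (ℕ × ℕ))) =
          Multiset.map (fun j => some (j, 1)) ↑(List.drop q (L s))
            + Multiset.replicate (q + 1) none) →
    ∃ C', Relation.ReflTransGen Step C C' ∧ Relation.ReflTransGen Step C' D ∧
      C'.Q = (List.replicate r (Seg T s)).flatten ∧ ∀ sp ∈ C'.S, sp = none := by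
  intro C D htr
  induction htr using Relation.ReflTransGen.head_induction_on with
  | refl =>
    intro hD hG hsh
    rcases hsh with hQ | ⟨q, hq, hQ, hS⟩
    · rw [hD.2.1] at hQ; exact absurd hQ (by simp)
    · rw [hD.2.1] at hQ
      rcases List.append_eq_nil_iff.mp hQ.symm with ⟨_, h2⟩
      exact ⟨_, Relation.ReflTransGen.refl, Relation.ReflTransGen.refl,
        by rw [hD.2.1, h2], hD.2.2⟩
  | @head C₁ F h' htl ih =>
    intro hD hG hsh
    have hGF : Good n T s a F := good_step hs hT hbound hG h'
    rcases hsh with hQ | ⟨q, hq, hQ, hS⟩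
    · -- phase [s]
      rcases h' with ⟨hna, v, i, hfree, hget, hCeq⟩ | ⟨x, Q', i, k, hQx, hget, hCeq⟩
      · -- player move: queue unchanged
        subst hCeq
        rcases ih hD hGF (Or.inl hQ) with ⟨C', h1, h2, h3, h4⟩
        exact ⟨C', Relation.ReflTransGen.head (Or.inl ⟨hna, v, i, hfree, hget, rfl⟩) h1,
          h2, h3, h4⟩
      · -- auto: must be the s-bus
        rw [hQ] at hQx
        injection hQx with hx hQ'
        subst hx
        -- pigeonhole on spots
        have hcard : Multiset.card (C₁.S : Multiset (Option (ℕ × ℕ))) = s := by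
          rw [Multiset.coe_card, hG.slen]
        have hbridge : ∀ j, ((C₁.S : Multiset (Option (ℕ × ℕ))).map (spotSeats j)).sum
            = (C₁.S.map (spotSeats j)).sum := by intro j; simp
        have hoddP : ∀ j, 1 ≤ j → j ≤ s - 1 →
            Odd (((C₁.S : Multiset (Option (ℕ × ℕ))).map (spotSeats j)).sum) := by
          intro j hj1 hj2
          have hcnt : C₁.Q.count j = 2 * r + 1 := by
            rw [hQ, List.count_cons, List.count_append, count_L_mem hj1 hj2,
              count_flatten_replicate, count_Seg_mid T hj1 hj2 hs]
            have : ¬ (s == j) = true := by simp; omega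
            simp [this]; ring
          have hcap := hG.count j
          rcases graph_even hs hG hj1 hj2 with ⟨m, hm⟩
          rw [Config.capOf, hm] at hcap
          rw [hbridge]
          rw [hcnt] at hcap
          exact Nat.odd_iff.mpr (by omega)
        have hshapeP : ∀ sp ∈ (C₁.S : Multiset (Option (ℕ × ℕ))), ∀ x k, sp = some (x, k) →
            1 ≤ k ∧ (x = 0 ∨ (1 ≤ x ∧ x ≤ s - 1 ∧ k ≤ 2) ∨ (x = s ∧ k = 1)) := by
          intro sp hsp
          exact hG.shape sp (Multiset.mem_coe.mp hsp)
        rcases PL hs _ hcard hoddP hshapeP with ⟨sl, hMeq, hslc⟩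
        -- the spot used must be the slack, equal to (s,1)
        have hmemk : some (s, k) ∈ (C₁.S : Multiset (Option (ℕ × ℕ))) :=
          Multiset.mem_coe.mpr (List.mem_of_getElem? hget)
        rw [hMeq] at hmemk
        have hsl : sl = some (s, k) := by
          rcases Multiset.mem_add.mp hmemk with hm | hm
          · exfalso
            rcases Multiset.mem_map.mp hm with ⟨j, hj, he⟩
            have hjL := mem_L.mp (Multiset.mem_coe.mp hj)
            have : j = s := by
              have := congrArg (fun o => (Option.getD o (0,0)).1) he
              simpa using this
            omega
          · exact (Multiset.mem_singleton.mp hm).symm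
        have hk1 : k = 1 := by
          rcases hslc with h | ⟨k', _, h⟩ | h | ⟨j, k', hj1, hj2, h⟩ <;>
            rw [h] at hsl <;>
            simp only [Option.some.injEq, Prod.mk.injEq, reduceCtorEq] at hsl <;>
            omega
        subst hk1
        have hif : (if (1:ℕ) ≤ 1 then none else some (s, 1 - 1)) = (none : Option (ℕ × ℕ)) := by
          norm_num
        rw [hif] at hCeq
        subst hCeq
        have hkey := BOaux.coe_set C₁.S i none (some (s, 1)) hget
        have hSF : ((C₁.S.set i none : List _) : Multiset (Option (ℕ × ℕ)))
            = Multiset.map (fun j => some (j, 1)) ↑(List.drop 0 (L s))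
              + Multiset.replicate (0 + 1) none := by
          rw [List.drop_zero]
          apply add_right_cancel (b := ({some (s, 1)} : Multiset (Option (ℕ × ℕ))))
          rw [hkey, hMeq, hsl]
          have hrep : Multiset.replicate (0 + 1) (none : Option (ℕ × ℕ)) = {none} := rfl
          rw [hrep, add_assoc, add_assoc]
          congr 1
          exact add_comm _ _
        rcases ih hD hGF (Or.inr ⟨0, by omega, by
            show Q' = List.drop 0 (L s) ++ _
            rw [List.drop_zero]; exact hQ'.symm, hSF⟩) with ⟨C', h1, h2, h3, h4⟩
        refine ⟨C', Relation.ReflTransGen.head ?_ h1, h2, h3, h4⟩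
        exact Or.inr ⟨s, Q', i, 1, by rw [hQ, hQ'], hget, by rw [hif]⟩
    · -- phase cascade
      by_cases hqend : s - 1 ≤ q
      · have hdrop : List.drop q (L s) = [] := by
          rw [drop_L]
          have h0 : s - 1 - q = 0 := by omega
          rw [h0]
          rfl
        refine ⟨C₁, Relation.ReflTransGen.refl, Relation.ReflTransGen.head h' htl, ?_, ?_⟩
        · rw [hQ, hdrop]; rfl
        · intro sp hsp
          have : sp ∈ (C₁.S : Multiset (Option (ℕ × ℕ))) := Multiset.mem_coe.mpr hsp
          rw [hS, hdrop] at this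
          have h0 : ((([] : List ℕ) : Multiset ℕ)) = 0 := rfl
          rw [h0, Multiset.map_zero, zero_add] at this
          exact Multiset.eq_of_mem_replicate this
      · have hql : q < s - 1 := by omega
        have hcons := L_cons (s := s) hql
        have hmem1 : some (q + 1, 1) ∈ C₁.S := by
          apply Multiset.mem_coe.mp
          rw [hS]
          apply Multiset.mem_add.mpr
          left
          apply Multiset.mem_map.mpr
          refine ⟨q + 1, ?_, rfl⟩
          apply Multiset.mem_coe.mpr
          rw [hcons]
          exact List.mem_cons_self
        rcases List.mem_iff_getElem?.mp hmem1 with ⟨i₀, hget₀⟩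
        have hQc : C₁.Q = (q + 1) :: (List.drop (q + 1) (L s)
            ++ (List.replicate r (Seg T s)).flatten) := by
          rw [hQ, hcons]; rfl
        rcases h' with ⟨hna, _⟩ | ⟨x, Q', i, k, hQx, hget, hCeq⟩
        · exfalso
          exact hna ⟨_, q + 1, _, i₀, 1, hQc, hget₀, rfl⟩
        · rw [hQc] at hQx
          injection hQx with hx hQ'
          subst hx
          -- identify k = 1
          have hmemk : some (q + 1, k) ∈ (C₁.S : Multiset (Option (ℕ × ℕ))) :=
            Multiset.mem_coe.mpr (List.mem_of_getElem? hget)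
          rw [hS] at hmemk
          have hk1 : k = 1 := by
            rcases Multiset.mem_add.mp hmemk with hm | hm
            · rcases Multiset.mem_map.mp hm with ⟨j, hj, he⟩
              have h2 := congrArg (fun o => (Option.getD o (0,0)).2) he
              simp at h2
              omega
            · exact absurd (Multiset.eq_of_mem_replicate hm) (by simp)
          subst hk1
          have hif : (if (1:ℕ) ≤ 1 then none else some (q+1, 1 - 1))
              = (none : Option (ℕ × ℕ)) := by norm_num
          rw [hif] at hCeq
          subst hCeq
          have hkey := BOaux.coe_set C₁.S i none (some (q + 1, 1)) hget
          have hmapcons : Multiset.map (fun j => some (j, 1)) (↑(List.drop q (L s)) : Multiset ℕ)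
              = some (q + 1, 1) ::ₘ Multiset.map (fun j => (some (j, 1) : Option (ℕ × ℕ)))
                  ↑(List.drop (q + 1) (L s)) := by
            rw [hcons, ← Multiset.cons_coe, Multiset.map_cons]
          have hSF : ((C₁.S.set i none : List _) : Multiset (Option (ℕ × ℕ)))
              = Multiset.map (fun j => some (j, 1)) ↑(List.drop (q + 1) (L s))
                + Multiset.replicate (q + 1 + 1) none := by
            apply add_right_cancel (b := ({some (q + 1, 1)} : Multiset (Option (ℕ × ℕ))))
            rw [hkey, hS, hmapcons, Multiset.replicate_succ (n := q + 1),
              ← Multiset.singleton_add, ← Multiset.singleton_add]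
            abel
          rcases ih hD hGF (Or.inr ⟨q + 1, by omega, hQ'.symm, hSF⟩) with ⟨C', h1, h2, h3, h4⟩
          refine ⟨C', Relation.ReflTransGen.head ?_ h1, h2, h3, h4⟩
          exact Or.inr ⟨q + 1, Q', i, 1, by rw [hQc, hQ'], hget, by rw [hif]⟩

end
section
variable {n T s : ℕ} {a : ℕ → ℕ}

lemma mainL (hs : 1 ≤ s) (hT : 0 < T)
    (hbound : ∀ i < 3 * n, T < 4 * a i ∧ 2 * a i < T) :
    ∀ r (C D : Config), Good n T s a C →
      C.Q = (List.replicate r (Seg T s)).flatten →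
      (∀ sp ∈ C.S, sp = none) →
      Relation.ReflTransGen Step C D → D.IsEmpty →
      ∃ f : ℕ → ℕ,
        (∀ i ∈ (Finset.range (3 * n)).filter (fun i => Nat.pair 0 i ∈ C.V), f i < r) ∧
        ∀ g < r,
          (((Finset.range (3 * n)).filter (fun i => Nat.pair 0 i ∈ C.V)).filter
            (fun i => f i = g)).card = 3 ∧
          (((Finset.range (3 * n)).filter (fun i => Nat.pair 0 i ∈ C.V)).filter
            (fun i => f i = g)).sum a = T := by
  intro r
  induction r with
  | zero =>
    intro C D hG hQ hnone htr hD
    refine ⟨fun _ => 0, ?_, ?_⟩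
    · intro i hi
      exfalso
      rcases Finset.mem_filter.mp hi with ⟨hir, hiV⟩
      have hsum0 : ((Finset.range (3 * n)).filter (fun i => Nat.pair 0 i ∈ C.V)).sum a = 0 := by
        rw [← cap0_eq hs hG hnone, ← hG.count 0, hQ]
        simp
      have hz := (Finset.sum_eq_zero_iff.mp hsum0) i hi
      have hb := hbound i (Finset.mem_range.mp hir)
      omega
    · intro g hg
      exact absurd hg (Nat.not_lt_zero g)
  | succ r ih =>
    intro C D hG hQ hnone htr hD
    have hQd : C.Q = (L s ++ List.replicate T 0)
        ++ (s :: (L s ++ (List.replicate r (Seg T s)).flatten)) := by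
      rw [hQ, replicate_succ_flatten]
      simp [Seg, List.append_assoc]
    rcases suffix_reach C D htr hD.2.1 _ _ hQd with ⟨E, hCE, hED, hEQ⟩
    have hGE : Good n T s a E := rt_good hs hT hbound hG hCE
    rcases cascade hs hT hbound r E D hED hD hGE (Or.inl hEQ) with
      ⟨C'', hEC, hCD'', hQ'', hnone''⟩
    have hGC'' : Good n T s a C'' := rt_good hs hT hbound hGE hEC
    have hVsub : C''.V ⊆ C.V := (rt_V hEC).trans (rt_V hCE)
    classical
    set U := (Finset.range (3 * n)).filter (fun i => Nat.pair 0 i ∈ C.V) with hU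
    set U' := (Finset.range (3 * n)).filter (fun i => Nat.pair 0 i ∈ C''.V) with hU'
    have hUsub : U' ⊆ U := by
      intro i hi
      rcases Finset.mem_filter.mp hi with ⟨h1, h2⟩
      exact Finset.mem_filter.mpr ⟨h1, hVsub h2⟩
    have hsumU : U.sum a = (r + 1) * T := by
      rw [hU, ← cap0_eq hs hG hnone, ← hG.count 0, hQ, count_flatten_replicate,
        count_Seg_zero T hs]
    have hsumU' : U'.sum a = r * T := by
      rw [hU', ← cap0_eq hs hGC'' hnone'', ← hGC''.count 0, hQ'', count_flatten_replicate,
        count_Seg_zero T hs]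
    have hsdiff : (U \ U').sum a + U'.sum a = U.sum a := Finset.sum_sdiff (f := a) hUsub
    have hsumW : (U \ U').sum a = T := by
      rw [hsumU', hsumU] at hsdiff
      have hrt : (r + 1) * T = r * T + T := by ring
      omega
    have hcardW : (U \ U').card = 3 := by
      have hne : (U \ U').Nonempty := by
        rw [Finset.nonempty_iff_ne_empty]
        intro h
        rw [h, Finset.sum_empty] at hsumW
        omega
      have h4 : ∀ i ∈ U \ U', T < 4 * a i ∧ 2 * a i < T := by
        intro i hi
        have hiU : i ∈ U := Finset.sdiff_subset hi
        exact hbound i (Finset.mem_range.mp (Finset.mem_filter.mp hiU).1)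
      have hlt : (U \ U').sum (fun _ => T) < (U \ U').sum (fun i => 4 * a i) :=
        Finset.sum_lt_sum_of_nonempty hne (fun i hi => (h4 i hi).1)
      have hlt2 : (U \ U').sum (fun i => 2 * a i) < (U \ U').sum (fun _ => T) :=
        Finset.sum_lt_sum_of_nonempty hne (fun i hi => (h4 i hi).2)
      rw [Finset.sum_const, smul_eq_mul, ← Finset.mul_sum, hsumW] at hlt
      rw [Finset.sum_const, smul_eq_mul, ← Finset.mul_sum, hsumW] at hlt2
      have hc4 : (U \ U').card < 4 := by nlinarith
      have hc2 : 2 < (U \ U').card := by nlinarith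
      omega
    rcases ih C'' D hGC'' hQ'' hnone'' hCD'' hD with ⟨f', hf'1, hf'2⟩
    refine ⟨fun i => if i ∈ U' then f' i else r, ?_, ?_⟩
    · intro i hi
      by_cases hiU' : i ∈ U'
      · simp only [if_pos hiU']
        exact Nat.lt_succ_of_lt (hf'1 i hiU')
      · simp only [if_neg hiU']
        omega
    · intro g hg
      rcases Nat.lt_succ_iff_lt_or_eq.mp hg with hgr | rfl
      · have hfilter : U.filter (fun i => (if i ∈ U' then f' i else r) = g)
            = U'.filter (fun i => f' i = g) := by
          ext i
          simp only [Finset.mem_filter]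
          constructor
          · rintro ⟨hiU, hfe⟩
            by_cases hiU' : i ∈ U'
            · rw [if_pos hiU'] at hfe
              exact ⟨hiU', hfe⟩
            · rw [if_neg hiU'] at hfe
              omega
          · rintro ⟨hiU', hfe⟩
            refine ⟨hUsub hiU', ?_⟩
            rw [if_pos hiU']
            exact hfe
        rw [hfilter]
        exact hf'2 g hgr
      · have hfilter : U.filter (fun i => (if i ∈ U' then f' i else g) = g) = U \ U' := by
          ext i
          simp only [Finset.mem_filter, Finset.mem_sdiff]
          constructor
          · rintro ⟨hiU, hfe⟩
            refine ⟨hiU, ?_⟩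
            intro hiU'
            rw [if_pos hiU'] at hfe
            have := hf'1 i hiU'
            omega
          · rintro ⟨hiU, hiU'⟩
            exact ⟨hiU, by rw [if_neg hiU']⟩
        rw [hfilter]
        exact ⟨hcardW, hsumW⟩

end
section
variable {n T s : ℕ} {a : ℕ → ℕ}

lemma V0_filter_0 (a : ℕ → ℕ) (hs : 1 ≤ s) :
    (V0 n s).filter (fun v => (bL s a v).1 = 0) = (Finset.range (3 * n)).image (Nat.pair 0) := by
  ext v
  simp only [Finset.mem_filter, Finset.mem_image, Finset.mem_range]
  constructor
  · rintro ⟨hv, hcol⟩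
    rcases mem_V0.mp hv with ⟨i, hi, rfl⟩ | ⟨j', hj'1, hj'2, m, hm, rfl⟩
    · exact ⟨i, hi, rfl⟩
    · exfalso
      by_cases hjs : j' = s
      · subst hjs; rw [bL_pairs a m hs] at hcol; simp at hcol; omega
      · rw [bL_pairj a m hj'1 (by omega) hs] at hcol; simp at hcol; omega
  · rintro ⟨i, hi, rfl⟩
    refine ⟨mem_V0.mpr (Or.inl ⟨i, hi, rfl⟩), ?_⟩
    rw [bL_pair0]

lemma V0_filter_j (a : ℕ → ℕ) (hs : 1 ≤ s) {j : ℕ} (hj1 : 1 ≤ j) (hj2 : j ≤ s - 1) :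
    (V0 n s).filter (fun v => (bL s a v).1 = j) = (Finset.range n).image (Nat.pair j) := by
  ext v
  simp only [Finset.mem_filter, Finset.mem_image, Finset.mem_range]
  constructor
  · rintro ⟨hv, hcol⟩
    rcases mem_V0.mp hv with ⟨i, hi, rfl⟩ | ⟨j', hj'1, hj'2, m, hm, rfl⟩
    · exfalso; rw [bL_pair0] at hcol; simp at hcol; omega
    · by_cases hjs : j' = s
      · exfalso; subst hjs; rw [bL_pairs a m hs] at hcol; simp at hcol; omega
      · rw [bL_pairj a m hj'1 (by omega) hs] at hcol
        simp at hcol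
        subst hcol
        exact ⟨m, hm, rfl⟩
  · rintro ⟨m, hm, rfl⟩
    refine ⟨mem_V0.mpr (Or.inr ⟨j, hj1, by omega, m, hm, rfl⟩), ?_⟩
    rw [bL_pairj a m hj1 hj2 hs]
lemma V0_filter_s (a : ℕ → ℕ) (hs : 1 ≤ s) :
    (V0 n s).filter (fun v => (bL s a v).1 = s) = (Finset.range n).image (Nat.pair s) := by
  ext v
  simp only [Finset.mem_filter, Finset.mem_image, Finset.mem_range]
  constructor
  · rintro ⟨hv, hcol⟩
    rcases mem_V0.mp hv with ⟨i, hi, rfl⟩ | ⟨j', hj'1, hj'2, m, hm, rfl⟩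
    · exfalso; rw [bL_pair0] at hcol; simp at hcol; omega
    · by_cases hjs : j' = s
      · subst hjs; exact ⟨m, hm, rfl⟩
      · exfalso; rw [bL_pairj a m hj'1 (by omega) hs] at hcol; simp at hcol; omega
  · rintro ⟨m, hm, rfl⟩
    refine ⟨mem_V0.mpr (Or.inr ⟨s, hs, le_refl s, m, hm, rfl⟩), ?_⟩
    rw [bL_pairs a m hs]
lemma V0_filter_other (a : ℕ → ℕ) (hs : 1 ≤ s) {x : ℕ} (hx0 : x ≠ 0) (hxs : x ≠ s)
    (hxm : ¬(1 ≤ x ∧ x ≤ s - 1)) :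
    (V0 n s).filter (fun v => (bL s a v).1 = x) = ∅ := by
  ext v
  simp only [Finset.mem_filter, Finset.notMem_empty, iff_false, not_and]
  intro hv hcol
  rcases mem_V0.mp hv with ⟨i, hi, rfl⟩ | ⟨j', hj'1, hj'2, m, hm, rfl⟩
  · rw [bL_pair0] at hcol; simp at hcol; omega
  · by_cases hjs : j' = s
    · subst hjs; rw [bL_pairs a m hs] at hcol; simp at hcol; omega
    · rw [bL_pairj a m hj'1 (by omega) hs] at hcol; simp at hcol; omega

lemma pair_inj_right {j N : ℕ} : ∀ x ∈ (Finset.range N), ∀ y ∈ (Finset.range N),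
    Nat.pair j x = Nat.pair j y → x = y := by
  intro x _ y _ h
  have h2 := congrArg (fun w => (Nat.unpair w).2) h
  simpa [Nat.unpair_pair] using h2

lemma good_Bconf (hs : 1 ≤ s) (hT : 0 < T) (hn : 0 < n)
    (hsum : ∑ i ∈ Finset.range (3 * n), a i = n * T)
    (hbound : ∀ i < 3 * n, T < 4 * a i ∧ 2 * a i < T) :
    Good n T s a (Bconf n T s a) := by
  have hQB : (Bconf n T s a).Q = (List.replicate n (Seg T s)).flatten := rfl
  have hlabB : (Bconf n T s a).label = bL s a := rfl
  have hVB : (Bconf n T s a).V = V0 n s := rfl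
  constructor
  · rfl
  · rfl
  · exact fun v hv => hv
  · simp [Bconf]
  · intro x
    have hsp : (((Bconf n T s a).S).map (spotSeats x)).sum = 0 := by
      show ((List.replicate s none).map (spotSeats x)).sum = 0
      rw [List.map_replicate]
      simp [spotSeats_none]
    rw [Config.capOf, hsp, add_zero, hQB, hlabB, hVB, count_flatten_replicate]
    by_cases hx0 : x = 0
    · subst hx0
      rw [count_Seg_zero T hs, V0_filter_0 a hs, Finset.sum_image pair_inj_right]
      have hcg : ∀ i ∈ Finset.range (3 * n), (bL s a (Nat.pair 0 i)).2 = a i := by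
        intro i _; rw [bL_pair0]
      rw [Finset.sum_congr rfl hcg, hsum]
    · by_cases hxm : 1 ≤ x ∧ x ≤ s - 1
      · rw [count_Seg_mid T hxm.1 hxm.2 hs, V0_filter_j a hs hxm.1 hxm.2,
          Finset.sum_image pair_inj_right]
        have : ∀ m ∈ Finset.range n, (bL s a (Nat.pair x m)).2 = 2 := by
          intro m _; rw [bL_pairj a m hxm.1 hxm.2 hs]
        rw [Finset.sum_congr rfl this, Finset.sum_const, smul_eq_mul]
        simp [mul_comm]
      · by_cases hxs : x = s
        · rw [hxs]
          rw [count_Seg_s T hs, V0_filter_s a hs, Finset.sum_image pair_inj_right]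
          have : ∀ m ∈ Finset.range n, (bL s a (Nat.pair s m)).2 = 1 := by
            intro m _; rw [bL_pairs a m hs]
          rw [Finset.sum_congr rfl this, Finset.sum_const, smul_eq_mul]
          simp
        · rw [count_Seg_other T hx0 hxs (fun hmem => hxm (mem_L.mp hmem)),
            V0_filter_other a hs hx0 hxs hxm]
          simp
  · intro sp hsp x k he
    have : sp = none := List.eq_of_mem_replicate hsp
    rw [this] at he
    cases he

end


/-- Backward direction of the congestion-free reduction with `s` spots and
`s+1` colors: a solution yields a 3-partition. -/
theorem edgeless_to_threePartition (n T s : ℕ) (a : ℕ → ℕ)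
    (hs : 1 ≤ s) (hn : 0 < n) (hT : 0 < T)
    (hsum : ∑ i ∈ Finset.range (3 * n), a i = n * T)
    (hbound : ∀ i < 3 * n, T < 4 * a i ∧ 2 * a i < T)
    (hsolv : Solvable (Bconf n T s a)) :
    HasPartition n T a := by
  rcases hsolv with ⟨D, htr, hD⟩
  have hGood : Good n T s a (Bconf n T s a) := good_Bconf hs hT hn hsum hbound
  have hQB : (Bconf n T s a).Q = (List.replicate n (Seg T s)).flatten := rfl
  have hnoneB : ∀ sp ∈ (Bconf n T s a).S, sp = none := by
    intro sp hsp
    exact List.eq_of_mem_replicate hsp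
  rcases mainL hs hT hbound n _ D hGood hQB hnoneB htr hD with ⟨f, h1, h2⟩
  have hUeq : (Finset.range (3 * n)).filter
      (fun i => Nat.pair 0 i ∈ (Bconf n T s a).V) = Finset.range (3 * n) := by
    apply Finset.filter_true_of_mem
    intro i hi
    show Nat.pair 0 i ∈ V0 n s
    exact mem_V0.mpr (Or.inl ⟨i, Finset.mem_range.mp hi, rfl⟩)
  rw [hUeq] at h1 h2
  exact ⟨f, fun i hi => h1 i (Finset.mem_range.mpr hi), h2⟩
end
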